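/- Soundness of the algorithmic type equality: if the algorithmic judgment V ; C ; · ⊢ A ≡ B is derivable (with empty closure context), then the declarative judgment ∀V. C ⇒ A ≡ B holds, i.e., for every ground substitution σ : V of natural numbers with C[σ] true, A[σ] ≡ B[σ]. -/

import Mathlib

/-! Arithmetic expressions and Presburger propositions over natural numbers,
with de Bruijn index variables. -/

inductive AExp : Type
  | const : ℕ → AExp
  | var : ℕ → AExp
  | add : AExp → AExp → AExp
  | sub : AExp → AExp → AExp
  | mul : ℕ → AExp → AExp
deriving DecidableEq

namespace AExp

def eval (σ : ℕ → ℕ) : AExp → ℕ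
  | const n => n
  | var n => σ n
  | add a b => a.eval σ + b.eval σ
  | sub a b => a.eval σ - b.eval σ
  | mul k a => k * a.eval σ

def subst (τ : ℕ → AExp) : AExp → AExp
  | const n => const n
  | var n => τ n
  | add a b => add (a.subst τ) (b.subst τ)
  | sub a b => sub (a.subst τ) (b.subst τ)
  | mul k a => mul k (a.subst τ)

def hasVar : AExp → Bool
  | const _ => false
  | var _ => true
  | add a b => a.hasVar || b.hasVar
  | sub a b => a.hasVar || b.hasVar
  | mul _ a => a.hasVar

/-- Normalization: a closed arithmetic expression is replaced by its value. -/
def norm (e : AExp) : AExp := if e.hasVar then e else .const (e.eval (fun _ => 0))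

/-- Substitution followed by normalization of closed expressions to their values. -/
def substN (τ : ℕ → AExp) (e : AExp) : AExp := (e.subst τ).norm

/-- All variables of `e` are `< k`. -/
def ClosedAt (k : ℕ) : AExp → Prop
  | const _ => True
  | var n => n < k
  | add a b => a.ClosedAt k ∧ b.ClosedAt k
  | sub a b => a.ClosedAt k ∧ b.ClosedAt k
  | mul _ a => a.ClosedAt k

end AExp

/-- Cons for substitutions/assignments. -/
def scons {α : Type*} (i : α) (σ : ℕ → α) : ℕ → α
  | 0 => i
  | n + 1 => σ n

/-- Lifting a substitution under a binder. -/
def liftτ (τ : ℕ → AExp) : ℕ → AExp :=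
  scons (AExp.var 0) (fun n => (τ n).subst (fun k => AExp.var (k + 1)))

inductive AProp : Type
  | aeq : AExp → AExp → AProp
  | agt : AExp → AExp → AProp
  | tt : AProp
  | ff : AProp
  | conj : AProp → AProp → AProp
  | disj : AProp → AProp → AProp
  | neg : AProp → AProp
  | aexists : AProp → AProp
  | aforall : AProp → AProp

namespace AProp

def holds (σ : ℕ → ℕ) : AProp → Prop
  | aeq a b => a.eval σ = b.eval σ
  | agt a b => b.eval σ < a.eval σ
  | tt => True
  | ff => False
  | conj φ ψ => φ.holds σ ∧ ψ.holds σ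
  | disj φ ψ => φ.holds σ ∨ ψ.holds σ
  | neg φ => ¬ φ.holds σ
  | aexists φ => ∃ i : ℕ, φ.holds (scons i σ)
  | aforall φ => ∀ i : ℕ, φ.holds (scons i σ)

def subst (τ : ℕ → AExp) : AProp → AProp
  | aeq a b => aeq (a.subst τ) (b.subst τ)
  | agt a b => agt (a.subst τ) (b.subst τ)
  | tt => tt
  | ff => ff
  | conj φ ψ => conj (φ.subst τ) (ψ.subst τ)
  | disj φ ψ => disj (φ.subst τ) (ψ.subst τ)
  | neg φ => neg (φ.subst τ)
  | aexists φ => aexists (φ.subst (liftτ τ))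
  | aforall φ => aforall (φ.subst (liftτ τ))

def ClosedAt (k : ℕ) : AProp → Prop
  | aeq a b => a.ClosedAt k ∧ b.ClosedAt k
  | agt a b => a.ClosedAt k ∧ b.ClosedAt k
  | tt => True
  | ff => True
  | conj φ ψ => φ.ClosedAt k ∧ ψ.ClosedAt k
  | disj φ ψ => φ.ClosedAt k ∧ ψ.ClosedAt k
  | neg φ => φ.ClosedAt k
  | aexists φ => φ.ClosedAt (k + 1)
  | aforall φ => φ.ClosedAt (k + 1)

end AProp

/-! Session types.  Labeled choices are represented by association lists of
labels (natural numbers) and types.  Quantifiers bind a de Bruijn index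
variable. -/

inductive STy : Type
  | ichoice : List (ℕ × STy) → STy                -- ⊕{ℓ : A_ℓ}
  | echoice : List (ℕ × STy) → STy                -- &{ℓ : A_ℓ}
  | tensor : STy → STy → STy                      -- A ⊗ B
  | lolli : STy → STy → STy                       -- A ⊸ B
  | one : STy                                     -- 1
  | tname : ℕ → List AExp → STy                   -- V[ē]
  | sassert : AProp → STy → STy                   -- ?{φ}. A
  | sassume : AProp → STy → STy                   -- !{φ}. A
  | sexists : STy → STy                           -- ?n. A
  | sforall : STy → STy                           -- !n. A

namespace STy

/-- Substitution of arithmetic expressions for index variables in a session type. -/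
def subst (τ : ℕ → AExp) : STy → STy
  | ichoice L => ichoice (L.attach.map (fun p => (p.1.1, p.1.2.subst τ)))
  | echoice L => echoice (L.attach.map (fun p => (p.1.1, p.1.2.subst τ)))
  | tensor A B => tensor (A.subst τ) (B.subst τ)
  | lolli A B => lolli (A.subst τ) (B.subst τ)
  | one => one
  | tname v es => tname v (es.map (AExp.substN τ))
  | sassert φ A => sassert (φ.subst τ) (A.subst τ)
  | sassume φ A => sassume (φ.subst τ) (A.subst τ)
  | sexists A => sexists (A.subst (liftτ τ))
  | sforall A => sforall (A.subst (liftτ τ))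
decreasing_by
  all_goals simp_wf
  all_goals try omega
  all_goals
    (obtain ⟨⟨l, A⟩, hp⟩ := p
     have h := List.sizeOf_lt_of_mem hp
     simp [Prod.mk.sizeOf_spec] at h ⊢
     omega)

/-- Substituting a number for the index variable bound by a quantifier. -/
def subst0 (i : ℕ) (A : STy) : STy := A.subst (scons (AExp.const i) AExp.var)

/-- Ground instantiation of all free index variables by natural numbers. -/
def substC (σ : ℕ → ℕ) (A : STy) : STy := A.subst (fun n => AExp.const (σ n))

/-- All free index variables of the type are below `k`. -/
inductive ClosedAt : ℕ → STy → Prop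
  | ichoice {k L} : (∀ p ∈ L, ClosedAt k p.2) → ClosedAt k (ichoice L)
  | echoice {k L} : (∀ p ∈ L, ClosedAt k p.2) → ClosedAt k (echoice L)
  | tensor {k A B} : ClosedAt k A → ClosedAt k B → ClosedAt k (tensor A B)
  | lolli {k A B} : ClosedAt k A → ClosedAt k B → ClosedAt k (lolli A B)
  | one {k} : ClosedAt k one
  | tname {k v es} : (∀ e ∈ es, e.ClosedAt k) → ClosedAt k (tname v es)
  | sassert {k φ A} : φ.ClosedAt k → ClosedAt k A → ClosedAt k (sassert φ A)
  | sassume {k φ A} : φ.ClosedAt k → ClosedAt k A → ClosedAt k (sassume φ A)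
  | sexists {k A} : ClosedAt (k + 1) A → ClosedAt k (sexists A)
  | sforall {k A} : ClosedAt (k + 1) A → ClosedAt k (sforall A)

/-- A closed session type: no free index variables. -/
def Closed (A : STy) : Prop := ClosedAt 0 A

def isName : STy → Prop
  | tname _ _ => True
  | _ => False

end STy

/-- A signature is a finite list of type definitions; the type name `v` is
defined by the `v`-th entry (whose free index variables `0, …` are the
parameters `n̄`). -/
abbrev Sig : Type := List STy

/-- A contractive signature: no definition body is itself a type name. -/
def Contractive (Sg : Sig) : Prop := ∀ B ∈ Sg, ¬ B.isName

/-- Unfolding of a type: a type name is replaced by its instantiated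
definition; all other types are returned unchanged. -/
def unfoldT (Sg : Sig) : STy → STy
  | .tname v es => (Sg.getD v .one).subst (fun n => es.getD n (.const 0))
  | A => A

/-- The default (empty) assignment; used to evaluate closed propositions
in the standard model. -/
def σ0 : ℕ → ℕ := fun _ => 0

/-- Componentwise matching of labeled alternatives by a relation. -/
def MatchAlts (R : STy → STy → Prop) (L L' : List (ℕ × STy)) : Prop :=
  List.Forall₂ (fun p q => p.1 = q.1 ∧ R p.2 q.2) L L'

/-- `R` is a type bisimulation (Definition of type bisimulation). -/
def IsBisim (Sg : Sig) (R : STy → STy → Prop) : Prop :=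
  ∀ ⦃A B : STy⦄, R A B →
    (∀ L, unfoldT Sg A = .ichoice L →
      ∃ L', unfoldT Sg B = .ichoice L' ∧ MatchAlts R L L') ∧
    (∀ L, unfoldT Sg A = .echoice L →
      ∃ L', unfoldT Sg B = .echoice L' ∧ MatchAlts R L L') ∧
    (∀ A₁ A₂, unfoldT Sg A = .tensor A₁ A₂ →
      ∃ B₁ B₂, unfoldT Sg B = .tensor B₁ B₂ ∧ R A₁ B₁ ∧ R A₂ B₂) ∧
    (∀ A₁ A₂, unfoldT Sg A = .lolli A₁ A₂ →
      ∃ B₁ B₂, unfoldT Sg B = .lolli B₁ B₂ ∧ R A₁ B₁ ∧ R A₂ B₂) ∧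
    (unfoldT Sg A = .one → unfoldT Sg B = .one) ∧
    (∀ φ A', unfoldT Sg A = .sassert φ A' →
      ∃ ψ B', unfoldT Sg B = .sassert ψ B' ∧
        ((φ.holds σ0 ∧ ψ.holds σ0 ∧ R A' B') ∨ (¬ φ.holds σ0 ∧ ¬ ψ.holds σ0))) ∧
    (∀ φ A', unfoldT Sg A = .sassume φ A' →
      ∃ ψ B', unfoldT Sg B = .sassume ψ B' ∧
        ((φ.holds σ0 ∧ ψ.holds σ0 ∧ R A' B') ∨ (¬ φ.holds σ0 ∧ ¬ ψ.holds σ0))) ∧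
    (∀ A', unfoldT Sg A = .sexists A' →
      ∃ B', unfoldT Sg B = .sexists B' ∧ ∀ i : ℕ, R (A'.subst0 i) (B'.subst0 i)) ∧
    (∀ A', unfoldT Sg A = .sforall A' →
      ∃ B', unfoldT Sg B = .sforall B' ∧ ∀ i : ℕ, R (A'.subst0 i) (B'.subst0 i))

/-- Type equality: `A ≡ B` iff some type bisimulation relates them. -/
def TpEq (Sg : Sig) (A B : STy) : Prop :=
  ∃ R : STy → STy → Prop, IsBisim Sg R ∧ R A B

/-- The quantified judgment `∀V. C ⇒ A ≡ B`. -/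
def EqUnder (Sg : Sig) (C : AProp) (A B : STy) : Prop :=
  ∀ σ : ℕ → ℕ, C.holds σ → TpEq Sg (A.substC σ) (B.substC σ)

/-! The algorithmic type equality judgment. -/

/-- Semantic entailment `V ; C ⊨ φ` (over all assignments of naturals to the
index variables). -/
def Entails (C φ : AProp) : Prop := ∀ σ : ℕ → ℕ, C.holds σ → φ.holds σ

/-- `V ; C ⊨ φ ↔ ψ`. -/
def EntailsIff (C φ ψ : AProp) : Prop :=
  ∀ σ : ℕ → ℕ, C.holds σ → (φ.holds σ ↔ ψ.holds σ)

/-- Shifting a proposition when a fresh index variable is added to `V`. -/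
def AProp.shift (φ : AProp) : AProp := φ.subst (fun n => .var (n + 1))

/-- A closure `∀V′. C′ ⇒ V₁[ē₁] ≡ V₂[ē₂]` stored in the context `Γ` of the
algorithmic type-equality judgment. -/
structure Closure : Type where
  ctx : AProp
  v₁ : ℕ
  es₁ : List AExp
  v₂ : ℕ
  es₂ : List AExp

/-- Instantiation of the body of a type definition with index expressions. -/
def instDef (Sg : Sig) (v : ℕ) (es : List AExp) : STy :=
  (Sg.getD v .one).subst (fun n => es.getD n (.const 0))

/-- The algorithmic type equality judgment `V ; C ; Γ ⊢ A ≡ B`, parameterized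
by an extra side condition `G` imposed on the two types of every conclusion
(take `G := fun _ _ => True` for the plain judgment). -/
inductive AlgEq (Sg : Sig) (G : STy → STy → Prop) :
    AProp → List Closure → STy → STy → Prop
  | ichoice {C Γ} {L L' : List (ℕ × STy)} :
      G (.ichoice L) (.ichoice L') →
      L.map Prod.fst = L'.map Prod.fst →
      (∀ i, (h₁ : i < L.length) → (h₂ : i < L'.length) →
        AlgEq Sg G C Γ (L[i]).2 (L'[i]).2) →
      AlgEq Sg G C Γ (.ichoice L) (.ichoice L')
  | echoice {C Γ} {L L' : List (ℕ × STy)} :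
      G (.echoice L) (.echoice L') →
      L.map Prod.fst = L'.map Prod.fst →
      (∀ i, (h₁ : i < L.length) → (h₂ : i < L'.length) →
        AlgEq Sg G C Γ (L[i]).2 (L'[i]).2) →
      AlgEq Sg G C Γ (.echoice L) (.echoice L')
  | tensor {C Γ A₁ A₂ B₁ B₂} :
      G (.tensor A₁ A₂) (.tensor B₁ B₂) →
      AlgEq Sg G C Γ A₁ B₁ → AlgEq Sg G C Γ A₂ B₂ →
      AlgEq Sg G C Γ (.tensor A₁ A₂) (.tensor B₁ B₂)
  | lolli {C Γ A₁ A₂ B₁ B₂} :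
      G (.lolli A₁ A₂) (.lolli B₁ B₂) →
      AlgEq Sg G C Γ A₁ B₁ → AlgEq Sg G C Γ A₂ B₂ →
      AlgEq Sg G C Γ (.lolli A₁ A₂) (.lolli B₁ B₂)
  | one {C Γ} : G .one .one → AlgEq Sg G C Γ .one .one
  | sassert {C Γ φ ψ A B} :
      G (.sassert φ A) (.sassert ψ B) →
      EntailsIff C φ ψ →
      AlgEq Sg G (C.conj φ) Γ A B →
      AlgEq Sg G C Γ (.sassert φ A) (.sassert ψ B)
  | sassume {C Γ φ ψ A B} :
      G (.sassume φ A) (.sassume ψ B) →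
      EntailsIff C φ ψ →
      AlgEq Sg G (C.conj φ) Γ A B →
      AlgEq Sg G C Γ (.sassume φ A) (.sassume ψ B)
  | sexists {C Γ A B} :
      G (.sexists A) (.sexists B) →
      AlgEq Sg G C.shift Γ A B →
      AlgEq Sg G C Γ (.sexists A) (.sexists B)
  | sforall {C Γ A B} :
      G (.sforall A) (.sforall B) →
      AlgEq Sg G C.shift Γ A B →
      AlgEq Sg G C Γ (.sforall A) (.sforall B)
  | bot {C Γ A B} :
      G A B →
      (∀ σ : ℕ → ℕ, ¬ C.holds σ) →
      AlgEq Sg G C Γ A B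
  | defr {C Γ C' v₁ v₂} {E₁ E₂ es₁ es₂ : List AExp} :
      G (.tname v₁ es₁) (.tname v₂ es₂) →
      Closure.mk C' v₁ E₁ v₂ E₂ ∈ Γ →
      (∀ σ : ℕ → ℕ, C.holds σ → ∃ σ' : ℕ → ℕ, C'.holds σ' ∧
        E₁.map (AExp.eval σ') = es₁.map (AExp.eval σ) ∧
        E₂.map (AExp.eval σ') = es₂.map (AExp.eval σ)) →
      AlgEq Sg G C Γ (.tname v₁ es₁) (.tname v₂ es₂)
  | expd {C Γ v₁ v₂} {es₁ es₂ : List AExp} :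
      G (.tname v₁ es₁) (.tname v₂ es₂) →
      AlgEq Sg G C (Closure.mk C v₁ es₁ v₂ es₂ :: Γ)
        (instDef Sg v₁ es₁) (instDef Sg v₂ es₂) →
      AlgEq Sg G C Γ (.tname v₁ es₁) (.tname v₂ es₂)

/-! Ground instances `A[ρ] ≡ B[ρ]` of derivable judgments `C ; Γ ⊢ A ≡ B`, with `C[ρ]` true and
every closure of `Γ` itself derived in the context it extends, form a bisimulation up to
`EvalEquiv`, which compares index expressions and constraints only through their values. The
structural rules give a bisimulation step directly. For `expd`, and for `def` instantiated at a
witness of its entailment, the step comes from the derivation that compares the instantiated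
definitions; by contractiveness these are not type names, so a single unfolding reaches them.
Up-to is needed because unfolding `V[ē][ρ]` and instantiating `V[ē]` at `ρ` substitute
different closed expressions with the same values. -/

namespace AExp

theorem eval_subst (τ : ℕ → AExp) (ρ : ℕ → ℕ) (e : AExp) :
    (e.subst τ).eval ρ = e.eval fun n => (τ n).eval ρ := by
  induction e <;> simp [subst, eval, *]

theorem subst_subst (τ τ' : ℕ → AExp) (e : AExp) :
    (e.subst τ).subst τ' = e.subst fun n => (τ n).subst τ' := by
  induction e <;> simp [subst, *]

theorem eval_eq_of_hasVar_eq_false {e : AExp} (h : e.hasVar = false) (ρ ρ' : ℕ → ℕ) :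
    e.eval ρ = e.eval ρ' := by
  induction e <;> simp_all [hasVar, eval]

theorem subst_eq_self_of_hasVar_eq_false {e : AExp} (h : e.hasVar = false) (τ : ℕ → AExp) :
    e.subst τ = e := by
  induction e <;> simp_all [hasVar, subst]

theorem eval_norm (e : AExp) (ρ : ℕ → ℕ) : e.norm.eval ρ = e.eval ρ := by
  by_cases h : e.hasVar
  · simp [norm, h]
  · simp [norm, h, eval, eval_eq_of_hasVar_eq_false (Bool.of_not_eq_true h) _ ρ]

theorem eval_substN (τ : ℕ → AExp) (e : AExp) (ρ : ℕ → ℕ) :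
    (substN τ e).eval ρ = e.eval fun n => (τ n).eval ρ := by
  rw [substN, eval_norm, eval_subst]

theorem substN_substN (τ τ' : ℕ → AExp) (e : AExp) :
    substN τ' (substN τ e) = substN (fun n => (τ n).subst τ') e := by
  rw [substN, substN, substN, ← subst_subst]
  by_cases h : (e.subst τ).hasVar
  · simp [norm, h]
  · rw [Bool.not_eq_true] at h
    simp [norm, h, subst, hasVar, eval, subst_eq_self_of_hasVar_eq_false h]

theorem eval_getD (l : List AExp) (n : ℕ) (ρ : ℕ → ℕ) :
    (l.getD n (const 0)).eval ρ = (l.map (eval ρ)).getD n 0 :=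
  (List.getD_map ..).symm

end AExp

theorem liftτ_comp (τ τ' : ℕ → AExp) :
    liftτ (fun n => (τ n).subst τ') = fun n => (liftτ τ n).subst (liftτ τ') := by
  funext n
  cases n with
  | zero => rfl
  | succ n => simp only [liftτ, scons, AExp.subst_subst]; rfl

theorem eval_liftτ (τ : ℕ → AExp) (i : ℕ) (ρ : ℕ → ℕ) :
    (fun n => (liftτ τ n).eval (scons i ρ)) = scons i fun n => (τ n).eval ρ := by
  funext n
  cases n with
  | zero => rfl
  | succ n => simp only [liftτ, scons, AExp.eval_subst]; rfl

namespace AProp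

theorem holds_subst (φ : AProp) (τ : ℕ → AExp) (ρ : ℕ → ℕ) :
    (φ.subst τ).holds ρ ↔ φ.holds fun n => (τ n).eval ρ := by
  induction φ generalizing τ ρ with
  | aexists φ ih | aforall φ ih =>
    simp only [subst, holds, ih, eval_liftτ]
  | _ => simp_all [subst, holds, AExp.eval_subst]

theorem subst_subst (φ : AProp) (τ τ' : ℕ → AExp) :
    (φ.subst τ).subst τ' = φ.subst fun n => (τ n).subst τ' := by
  induction φ generalizing τ τ' <;> simp [subst, AExp.subst_subst, liftτ_comp, *]

theorem holds_subst_const (φ : AProp) (ρ ρ' : ℕ → ℕ) :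
    (φ.subst fun n => .const (ρ n)).holds ρ' ↔ φ.holds ρ :=
  holds_subst φ _ ρ'

theorem holds_shift (φ : AProp) (i : ℕ) (ρ : ℕ → ℕ) :
    φ.shift.holds (scons i ρ) ↔ φ.holds ρ :=
  holds_subst φ _ _

end AProp

namespace STy

theorem induction {motive : STy → Prop}
    (ichoice : ∀ L, (∀ p ∈ L, motive p.2) → motive (ichoice L))
    (echoice : ∀ L, (∀ p ∈ L, motive p.2) → motive (echoice L))
    (tensor : ∀ A B, motive A → motive B → motive (tensor A B))
    (lolli : ∀ A B, motive A → motive B → motive (lolli A B))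
    (one : motive one)
    (tname : ∀ v es, motive (tname v es))
    (sassert : ∀ φ A, motive A → motive (sassert φ A))
    (sassume : ∀ φ A, motive A → motive (sassume φ A))
    (sexists : ∀ A, motive A → motive (sexists A))
    (sforall : ∀ A, motive A → motive (sforall A)) (A : STy) : motive A :=
  STy.rec (motive_2 := fun L => ∀ p ∈ L, motive p.2) (motive_3 := fun p => motive p.2)
    ichoice echoice tensor lolli one tname sassert sassume sexists sforall
    (fun _ h => absurd h List.not_mem_nil) (fun _ _ hp hL => List.forall_mem_cons.2 ⟨hp, hL⟩)
    (fun _ _ h => h) A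

@[simp] theorem subst_ichoice (τ : ℕ → AExp) (L : List (ℕ × STy)) :
    (ichoice L).subst τ = ichoice (L.map fun p => (p.1, p.2.subst τ)) := by
  rw [subst, List.attach_map_val (l := L) (f := fun p => (p.1, p.2.subst τ))]

@[simp] theorem subst_echoice (τ : ℕ → AExp) (L : List (ℕ × STy)) :
    (echoice L).subst τ = echoice (L.map fun p => (p.1, p.2.subst τ)) := by
  rw [subst, List.attach_map_val (l := L) (f := fun p => (p.1, p.2.subst τ))]

theorem subst_subst (A : STy) (τ τ' : ℕ → AExp) :
    (A.subst τ).subst τ' = A.subst fun n => (τ n).subst τ' := by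
  induction A using STy.induction generalizing τ τ' with
  | ichoice L ih | echoice L ih =>
    simp only [subst_ichoice, subst_echoice, List.map_map]
    congr 1
    exact List.map_congr_left fun p hp => by simp [ih p hp]
  | tname v es =>
    simp only [subst, List.map_map]
    congr 1
    exact List.map_congr_left fun e _ => AExp.substN_substN τ τ' e
  | _ => simp [subst, AProp.subst_subst, liftτ_comp, *]

theorem isName_subst (A : STy) (τ : ℕ → AExp) : (A.subst τ).isName ↔ A.isName := by
  cases A <;> simp [subst, isName]

theorem subst0_subst_liftτ_const (A : STy) (ρ : ℕ → ℕ) (i : ℕ) :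
    (A.subst (liftτ fun n => .const (ρ n))).subst0 i = A.substC (scons i ρ) := by
  rw [subst0, subst_subst, substC]
  congr 1
  funext n
  cases n <;> rfl

end STy

theorem matchAlts_of_getElem {R : STy → STy → Prop} {L L' : List (ℕ × STy)}
    (hl : L.map Prod.fst = L'.map Prod.fst)
    (h : ∀ i (h₁ : i < L.length) (h₂ : i < L'.length), R L[i].2 L'[i].2) :
    MatchAlts R L L' := by
  induction L generalizing L' with
  | nil => cases L' with
    | nil => exact .nil
    | cons => cases hl
  | cons p L ih => cases L' with
    | nil => cases hl
    | cons q L' =>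
      simp only [List.map_cons, List.cons.injEq] at hl
      exact .cons ⟨hl.1, h 0 (by simp) (by simp)⟩
        (ih hl.2 fun i h₁ h₂ => h (i + 1) (by simpa using h₁) (by simpa using h₂))

theorem matchAlts_map {R : STy → STy → Prop} {f : STy → STy} {L L' : List (ℕ × STy)} :
    MatchAlts R (L.map fun p => (p.1, f p.2)) (L'.map fun p => (p.1, f p.2)) ↔
      MatchAlts (fun A B => R (f A) (f B)) L L' := by
  simp [MatchAlts, List.forall₂_map_left_iff, List.forall₂_map_right_iff]

theorem MatchAlts.of_sides {P Q R S : STy → STy → Prop}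
    (hS : ∀ x x' y y', P x x' → Q y y' → R x' y' → S x y) {L L₂ M M₂ : List (ℕ × STy)}
    (hL : MatchAlts P L L₂) (hM : MatchAlts Q M M₂) (h : MatchAlts R L₂ M₂) :
    MatchAlts S L M := by
  induction h generalizing L M with
  | nil => cases hL; cases hM; exact .nil
  | cons hpq _ ih =>
    cases hL with | cons hL₁ hL => cases hM with | cons hM₁ hM =>
    exact .cons ⟨hL₁.1.trans (hpq.1.trans hM₁.1.symm), hS _ _ _ _ hL₁.2 hM₁.2 hpq.2⟩ (ih hL hM)

inductive EvalEquiv : STy → STy → Prop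
  | ichoice {L L' : List (ℕ × STy)} :
      L.map Prod.fst = L'.map Prod.fst →
      (∀ i, (h₁ : i < L.length) → (h₂ : i < L'.length) → EvalEquiv L[i].2 L'[i].2) →
      EvalEquiv (.ichoice L) (.ichoice L')
  | echoice {L L' : List (ℕ × STy)} :
      L.map Prod.fst = L'.map Prod.fst →
      (∀ i, (h₁ : i < L.length) → (h₂ : i < L'.length) → EvalEquiv L[i].2 L'[i].2) →
      EvalEquiv (.echoice L) (.echoice L')
  | tensor {A₁ A₂ B₁ B₂} : EvalEquiv A₁ B₁ → EvalEquiv A₂ B₂ →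
      EvalEquiv (.tensor A₁ A₂) (.tensor B₁ B₂)
  | lolli {A₁ A₂ B₁ B₂} : EvalEquiv A₁ B₁ → EvalEquiv A₂ B₂ →
      EvalEquiv (.lolli A₁ A₂) (.lolli B₁ B₂)
  | one : EvalEquiv .one .one
  | tname {v es es'} : (∀ ρ, es.map (AExp.eval ρ) = es'.map (AExp.eval ρ)) →
      EvalEquiv (.tname v es) (.tname v es')
  | sassert {φ ψ A B} : (∀ ρ, φ.holds ρ ↔ ψ.holds ρ) → EvalEquiv A B →
      EvalEquiv (.sassert φ A) (.sassert ψ B)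
  | sassume {φ ψ A B} : (∀ ρ, φ.holds ρ ↔ ψ.holds ρ) → EvalEquiv A B →
      EvalEquiv (.sassume φ A) (.sassume ψ B)
  | sexists {A B} : EvalEquiv A B → EvalEquiv (.sexists A) (.sexists B)
  | sforall {A B} : EvalEquiv A B → EvalEquiv (.sforall A) (.sforall B)

def SubstEquiv (τ τ' : ℕ → AExp) : Prop :=
  ∀ ρ, (fun n => (τ n).eval ρ) = fun n => (τ' n).eval ρ

theorem SubstEquiv.liftτ {τ τ' : ℕ → AExp} (h : SubstEquiv τ τ') :
    SubstEquiv (liftτ τ) (liftτ τ') := by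
  intro ρ
  funext n
  cases n with
  | zero => rfl
  | succ n => simp only [_root_.liftτ, scons, AExp.eval_subst]; exact congrFun (h _) n

namespace EvalEquiv

theorem refl (A : STy) : EvalEquiv A A := by
  induction A using STy.induction with
  | ichoice L ih => exact .ichoice rfl fun i h _ => ih _ (List.getElem_mem h)
  | echoice L ih => exact .echoice rfl fun i h _ => ih _ (List.getElem_mem h)
  | tensor _ _ ih₁ ih₂ => exact .tensor ih₁ ih₂
  | lolli _ _ ih₁ ih₂ => exact .lolli ih₁ ih₂
  | one => exact .one
  | tname => exact .tname fun _ => rfl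
  | sassert _ _ ih => exact .sassert (fun _ => .rfl) ih
  | sassume _ _ ih => exact .sassume (fun _ => .rfl) ih
  | sexists _ ih => exact .sexists ih
  | sforall _ ih => exact .sforall ih

theorem trans {A B C : STy} (h : EvalEquiv A B) (h' : EvalEquiv B C) : EvalEquiv A C := by
  induction h generalizing C with
  | ichoice hl _ ih =>
    cases h' with
    | ichoice hl' h' =>
      have := congrArg List.length hl
      simp only [List.length_map] at this
      exact .ichoice (hl.trans hl') fun i h₁ h₂ => ih i h₁ (this ▸ h₁) (h' i _ h₂)
  | echoice hl _ ih =>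
    cases h' with
    | echoice hl' h' =>
      have := congrArg List.length hl
      simp only [List.length_map] at this
      exact .echoice (hl.trans hl') fun i h₁ h₂ => ih i h₁ (this ▸ h₁) (h' i _ h₂)
  | tensor _ _ ih₁ ih₂ => cases h' with | tensor h₁ h₂ => exact .tensor (ih₁ h₁) (ih₂ h₂)
  | lolli _ _ ih₁ ih₂ => cases h' with | lolli h₁ h₂ => exact .lolli (ih₁ h₁) (ih₂ h₂)
  | one => exact h'
  | tname he => cases h' with | tname he' => exact .tname fun ρ => (he ρ).trans (he' ρ)
  | sassert hφ _ ih =>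
    cases h' with | sassert hψ h' => exact .sassert (fun ρ => (hφ ρ).trans (hψ ρ)) (ih h')
  | sassume hφ _ ih =>
    cases h' with | sassume hψ h' => exact .sassume (fun ρ => (hφ ρ).trans (hψ ρ)) (ih h')
  | sexists _ ih => cases h' with | sexists h' => exact .sexists (ih h')
  | sforall _ ih => cases h' with | sforall h' => exact .sforall (ih h')

theorem subst {A B : STy} (h : EvalEquiv A B) {τ τ' : ℕ → AExp} (hτ : SubstEquiv τ τ') :
    EvalEquiv (A.subst τ) (B.subst τ') := by
  induction h generalizing τ τ' with
  | ichoice hl _ ih =>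
    simp only [STy.subst_ichoice]
    refine .ichoice (by simpa [Function.comp_def] using hl) fun i h₁ h₂ => ?_
    simpa using ih i (by simpa using h₁) (by simpa using h₂) hτ
  | echoice hl _ ih =>
    simp only [STy.subst_echoice]
    refine .echoice (by simpa [Function.comp_def] using hl) fun i h₁ h₂ => ?_
    simpa using ih i (by simpa using h₁) (by simpa using h₂) hτ
  | tensor _ _ ih₁ ih₂ => rw [STy.subst, STy.subst]; exact .tensor (ih₁ hτ) (ih₂ hτ)
  | lolli _ _ ih₁ ih₂ => rw [STy.subst, STy.subst]; exact .lolli (ih₁ hτ) (ih₂ hτ)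
  | one => rw [STy.subst, STy.subst]; exact .one
  | tname he =>
    rw [STy.subst, STy.subst]
    refine .tname fun ρ => ?_
    simp only [List.map_map, Function.comp_def, AExp.eval_substN, hτ ρ]
    simpa [Function.comp_def] using he _
  | sassert hφ _ ih =>
    rw [STy.subst, STy.subst]
    exact .sassert (fun ρ => by simp only [AProp.holds_subst, hτ ρ, hφ]) (ih hτ)
  | sassume hφ _ ih =>
    rw [STy.subst, STy.subst]
    exact .sassume (fun ρ => by simp only [AProp.holds_subst, hτ ρ, hφ]) (ih hτ)
  | sexists _ ih =>
    rw [STy.subst, STy.subst]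
    exact .sexists (ih hτ.liftτ)
  | sforall _ ih =>
    rw [STy.subst, STy.subst]
    exact .sforall (ih hτ.liftτ)

end EvalEquiv

theorem unfoldT_of_not_isName (Sg : Sig) {A : STy} (h : ¬ A.isName) : unfoldT Sg A = A := by
  cases A <;> first | rfl | exact absurd trivial h

theorem EvalEquiv.unfoldT (Sg : Sig) {A B : STy} (h : EvalEquiv A B) :
    EvalEquiv (unfoldT Sg A) (unfoldT Sg B) := by
  cases h with
  | tname he =>
    refine (EvalEquiv.refl _).subst fun ρ => funext fun n => ?_
    rw [AExp.eval_getD, AExp.eval_getD, he]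
  | _ => simp only [_root_.unfoldT]; constructor <;> assumption

inductive Step (R : STy → STy → Prop) : STy → STy → Prop
  | ichoice {L L'} : MatchAlts R L L' → Step R (.ichoice L) (.ichoice L')
  | echoice {L L'} : MatchAlts R L L' → Step R (.echoice L) (.echoice L')
  | tensor {A₁ A₂ B₁ B₂} : R A₁ B₁ → R A₂ B₂ → Step R (.tensor A₁ A₂) (.tensor B₁ B₂)
  | lolli {A₁ A₂ B₁ B₂} : R A₁ B₁ → R A₂ B₂ → Step R (.lolli A₁ A₂) (.lolli B₁ B₂)
  | one : Step R .one .one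
  | sassert {φ ψ A B} :
      (φ.holds σ0 ∧ ψ.holds σ0 ∧ R A B) ∨ (¬ φ.holds σ0 ∧ ¬ ψ.holds σ0) →
      Step R (.sassert φ A) (.sassert ψ B)
  | sassume {φ ψ A B} :
      (φ.holds σ0 ∧ ψ.holds σ0 ∧ R A B) ∨ (¬ φ.holds σ0 ∧ ¬ ψ.holds σ0) →
      Step R (.sassume φ A) (.sassume ψ B)
  | sexists {A B} : (∀ i, R (A.subst0 i) (B.subst0 i)) → Step R (.sexists A) (.sexists B)
  | sforall {A B} : (∀ i, R (A.subst0 i) (B.subst0 i)) → Step R (.sforall A) (.sforall B)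

theorem isBisim_of_step {Sg : Sig} {R : STy → STy → Prop}
    (h : ∀ ⦃A B⦄, R A B → Step R (unfoldT Sg A) (unfoldT Sg B)) : IsBisim Sg R := by
  intro A B hAB
  have hs := h hAB
  generalize unfoldT Sg A = A', unfoldT Sg B = B' at hs ⊢
  cases hs <;> simp_all

theorem Step.of_evalEquiv {R S : STy → STy → Prop}
    (hS : ∀ x x' y y', EvalEquiv x x' → EvalEquiv y y' → R x' y' → S x y) {X X' Y Y' : STy}
    (hX : EvalEquiv X X') (hY : EvalEquiv Y Y') (h : Step R X' Y') : Step S X Y := by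
  cases h with
  | ichoice h =>
    cases hX with | ichoice hlX hX => cases hY with | ichoice hlY hY =>
    exact .ichoice (MatchAlts.of_sides hS (matchAlts_of_getElem hlX hX)
      (matchAlts_of_getElem hlY hY) h)
  | echoice h =>
    cases hX with | echoice hlX hX => cases hY with | echoice hlY hY =>
    exact .echoice (MatchAlts.of_sides hS (matchAlts_of_getElem hlX hX)
      (matchAlts_of_getElem hlY hY) h)
  | tensor h₁ h₂ =>
    cases hX with | tensor hX₁ hX₂ => cases hY with | tensor hY₁ hY₂ =>
    exact .tensor (hS _ _ _ _ hX₁ hY₁ h₁) (hS _ _ _ _ hX₂ hY₂ h₂)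
  | lolli h₁ h₂ =>
    cases hX with | lolli hX₁ hX₂ => cases hY with | lolli hY₁ hY₂ =>
    exact .lolli (hS _ _ _ _ hX₁ hY₁ h₁) (hS _ _ _ _ hX₂ hY₂ h₂)
  | one => cases hX; cases hY; exact .one
  | sassert h =>
    cases hX with | sassert hφ hX => cases hY with | sassert hψ hY =>
    refine .sassert ?_
    rw [hφ, hψ]
    exact h.imp_left fun ⟨h₁, h₂, h⟩ => ⟨h₁, h₂, hS _ _ _ _ hX hY h⟩
  | sassume h =>
    cases hX with | sassume hφ hX => cases hY with | sassume hψ hY =>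
    refine .sassume ?_
    rw [hφ, hψ]
    exact h.imp_left fun ⟨h₁, h₂, h⟩ => ⟨h₁, h₂, hS _ _ _ _ hX hY h⟩
  | sexists h =>
    cases hX with | sexists hX => cases hY with | sexists hY =>
    exact .sexists fun i => hS _ _ _ _ (hX.subst fun _ => rfl) (hY.subst fun _ => rfl) (h i)
  | sforall h =>
    cases hX with | sforall hX => cases hY with | sforall hY =>
    exact .sforall fun i => hS _ _ _ _ (hX.subst fun _ => rfl) (hY.subst fun _ => rfl) (h i)

theorem not_isName_instDef {Sg : Sig} (hSg : Contractive Sg) (v : ℕ) (es : List AExp) :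
    ¬ (instDef Sg v es).isName := by
  rw [instDef, STy.isName_subst]
  by_cases hv : v < Sg.length
  · rw [List.getD_eq_getElem _ _ hv]
    exact hSg _ (List.getElem_mem hv)
  · rw [List.getD_eq_default _ _ (not_lt.1 hv)]
    exact id

theorem evalEquiv_unfoldT_substC_instDef (Sg : Sig) {v : ℕ} {es E : List AExp} {ρ σ : ℕ → ℕ}
    (h : E.map (AExp.eval σ) = es.map (AExp.eval ρ)) :
    EvalEquiv (unfoldT Sg ((STy.tname v es).substC ρ)) ((instDef Sg v E).substC σ) := by
  rw [STy.substC, STy.subst, instDef, STy.substC, STy.subst_subst]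
  refine (EvalEquiv.refl _).subst fun ρ' => funext fun n => ?_
  rw [AExp.eval_getD, AExp.eval_subst, AExp.eval_getD, List.map_map]
  change _ = (E.map (AExp.eval σ)).getD n 0
  rw [h]
  congr 1
  exact List.map_congr_left fun e _ => AExp.eval_substN _ e ρ'

section Derivations

variable {Sg : Sig} {G : STy → STy → Prop}

def Valid (Sg : Sig) (G : STy → STy → Prop) : List Closure → Prop
  | [] => True
  | cl :: Γ => Valid Sg G Γ ∧
      AlgEq Sg G cl.ctx (cl :: Γ) (instDef Sg cl.v₁ cl.es₁) (instDef Sg cl.v₂ cl.es₂)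

theorem Valid.nil : Valid Sg G [] := trivial

theorem Valid.exists_of_mem {Γ : List Closure} {cl : Closure} (h : Valid Sg G Γ) (hcl : cl ∈ Γ) :
    ∃ Γ', Valid Sg G (cl :: Γ') := by
  induction Γ with
  | nil => cases hcl
  | cons c Γ ih =>
    rcases List.mem_cons.1 hcl with rfl | hcl
    · exact ⟨Γ, h⟩
    · exact ih h.1 hcl

inductive GroundDeriv (Sg : Sig) (G : STy → STy → Prop) : STy → STy → Prop
  | mk {C Γ A B ρ} : Valid Sg G Γ → AlgEq Sg G C Γ A B → C.holds ρ →
      GroundDeriv Sg G (A.substC ρ) (B.substC ρ)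

def GroundDerivUpTo (Sg : Sig) (G : STy → STy → Prop) (X Y : STy) : Prop :=
  ∃ X' Y', EvalEquiv X X' ∧ EvalEquiv Y Y' ∧ GroundDeriv Sg G X' Y'

theorem Step.upTo {X X' Y Y' : STy} (hX : EvalEquiv X X') (hY : EvalEquiv Y Y')
    (h : Step (GroundDeriv Sg G) X' Y') : Step (GroundDerivUpTo Sg G) X Y :=
  h.of_evalEquiv (fun _ _ _ _ hx hy h => ⟨_, _, hx, hy, h⟩) hX hY

theorem AlgEq.not_isName_right {C : AProp} {Γ : List Closure} {A B : STy} {ρ : ℕ → ℕ}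
    (d : AlgEq Sg G C Γ A B) (hC : C.holds ρ) (hA : ¬ A.isName) : ¬ B.isName := by
  cases d <;> simp_all [STy.isName]

theorem step_substC {C : AProp} {Γ : List Closure} {A B : STy} {ρ : ℕ → ℕ}
    (d : AlgEq Sg G C Γ A B) (hA : ¬ A.isName) (hΓ : Valid Sg G Γ) (hC : C.holds ρ) :
    Step (GroundDeriv Sg G) (A.substC ρ) (B.substC ρ) := by
  cases d with
  | ichoice _ hl h =>
    simp only [STy.substC, STy.subst_ichoice]
    exact .ichoice <| matchAlts_map.2 <|
      matchAlts_of_getElem hl fun i h₁ h₂ => .mk hΓ (h i h₁ h₂) hC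
  | echoice _ hl h =>
    simp only [STy.substC, STy.subst_echoice]
    exact .echoice <| matchAlts_map.2 <|
      matchAlts_of_getElem hl fun i h₁ h₂ => .mk hΓ (h i h₁ h₂) hC
  | tensor _ d₁ d₂ =>
    simp only [STy.substC, STy.subst]
    exact .tensor (.mk hΓ d₁ hC) (.mk hΓ d₂ hC)
  | lolli _ d₁ d₂ =>
    simp only [STy.substC, STy.subst]
    exact .lolli (.mk hΓ d₁ hC) (.mk hΓ d₂ hC)
  | one => simp only [STy.substC, STy.subst]; exact .one
  | @sassert _ _ φ _ _ _ _ hφψ d =>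
    simp only [STy.substC, STy.subst]
    refine .sassert ?_
    simp only [AProp.holds_subst_const]
    by_cases hφ : φ.holds ρ
    · exact .inl ⟨hφ, (hφψ ρ hC).1 hφ, .mk hΓ d ⟨hC, hφ⟩⟩
    · exact .inr ⟨hφ, mt (hφψ ρ hC).2 hφ⟩
  | @sassume _ _ φ _ _ _ _ hφψ d =>
    simp only [STy.substC, STy.subst]
    refine .sassume ?_
    simp only [AProp.holds_subst_const]
    by_cases hφ : φ.holds ρ
    · exact .inl ⟨hφ, (hφψ ρ hC).1 hφ, .mk hΓ d ⟨hC, hφ⟩⟩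
    · exact .inr ⟨hφ, mt (hφψ ρ hC).2 hφ⟩
  | sexists _ d =>
    simp only [STy.substC, STy.subst]
    refine .sexists fun i => ?_
    rw [STy.subst0_subst_liftτ_const, STy.subst0_subst_liftτ_const]
    exact .mk hΓ d ((AProp.holds_shift _ i ρ).2 hC)
  | sforall _ d =>
    simp only [STy.substC, STy.subst]
    refine .sforall fun i => ?_
    rw [STy.subst0_subst_liftτ_const, STy.subst0_subst_liftτ_const]
    exact .mk hΓ d ((AProp.holds_shift _ i ρ).2 hC)
  | bot _ hC' => exact absurd hC (hC' ρ)
  | defr | expd => exact absurd trivial hA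

theorem step_unfoldT_substC (hSg : Contractive Sg) {C : AProp} {Γ : List Closure} {A B : STy}
    {ρ : ℕ → ℕ} (d : AlgEq Sg G C Γ A B) (hΓ : Valid Sg G Γ) (hC : C.holds ρ) :
    Step (GroundDerivUpTo Sg G) (unfoldT Sg (A.substC ρ)) (unfoldT Sg (B.substC ρ)) := by
  by_cases hA : A.isName
  · obtain ⟨v, es, rfl⟩ : ∃ v es, A = .tname v es := by cases A <;> simp_all [STy.isName]
    cases d with
    | bot _ hC' => exact absurd hC (hC' ρ)
    | expd _ d =>
      exact (step_substC d (not_isName_instDef hSg _ _) ⟨hΓ, d⟩ hC).upTo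
        (evalEquiv_unfoldT_substC_instDef Sg rfl) (evalEquiv_unfoldT_substC_instDef Sg rfl)
    | defr _ hcl hent =>
      obtain ⟨σ, hσ, h₁, h₂⟩ := hent ρ hC
      obtain ⟨Γ', hΓ'⟩ := hΓ.exists_of_mem hcl
      exact (step_substC hΓ'.2 (not_isName_instDef hSg _ _) hΓ' hσ).upTo
        (evalEquiv_unfoldT_substC_instDef Sg h₁) (evalEquiv_unfoldT_substC_instDef Sg h₂)
  · have hB := d.not_isName_right hC hA
    rw [unfoldT_of_not_isName Sg (A := A.substC ρ) ((STy.isName_subst _ _).not.2 hA),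
      unfoldT_of_not_isName Sg (A := B.substC ρ) ((STy.isName_subst _ _).not.2 hB)]
    exact (step_substC d hA hΓ hC).upTo (.refl _) (.refl _)

theorem isBisim_groundDerivUpTo (hSg : Contractive Sg) : IsBisim Sg (GroundDerivUpTo Sg G) :=
  isBisim_of_step fun _ _ ⟨_, _, hX, hY, ⟨hΓ, d, hC⟩⟩ =>
    (step_unfoldT_substC hSg d hΓ hC).of_evalEquiv
      (fun _ _ _ _ hx hy ⟨_, _, hx', hy', h⟩ => ⟨_, _, hx.trans hx', hy.trans hy', h⟩)
      (hX.unfoldT Sg) (hY.unfoldT Sg)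

end Derivations

/-- soundness of the algorithmic type equality.  If
`V ; C ; · ⊢ A ≡ B` is derivable (with empty closure context), then
`∀V. C ⇒ A ≡ B` holds. -/
theorem algEq_sound (Sg : Sig) (hSg : Contractive Sg)
    (C : AProp) (A B : STy)
    (h : AlgEq Sg (fun _ _ => True) C [] A B) :
    EqUnder Sg C A B := fun _ hC =>
  ⟨_, isBisim_groundDerivUpTo hSg, _, _, .refl _, .refl _, .mk .nil h hC⟩
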